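/- arXiv:2111.08269 — 2 statements merged into one kernel-verified Lean document; each statement's English description precedes it below -/
import Mathlib

section
/- Let I be a finite nonempty set of patients and J a finite set of beds, and for each i ∈ I let J_i ⊆ J be a nonempty set of beds allowable for patient i, with J = ⋃_{i∈I} J_i. Let (Ω, F, P) be a probability space and, for each j ∈ J, let d_j : Ω → ℝ be a random variable (the time at which bed j becomes available). Let a : I → ℝ give bed request times and τ : I → ℝ with τ_i > 0 give delay targets, and let u : I × J → ℝ with u_{ij} ≥ 0 give overflow costs. Call an assignment plan z : I × J → {0,1} admissible if z_{ij} = 0 whenever j ∉ J_i, ∑_{j ∈ J_i} z_{ij} = 1 for every i ∈ I, and ∑_{i ∈ I} z_{ij} ≤ 1 for every j ∈ J; assume the set A of admissible plans is nonempty, let B* = min_{z ∈ A} ∑_{i∈I} ∑_{j∈J_i} z_{ij} u_{ij}, and let B ≥ B*, so that the feasible set F(B) = { z ∈ A : ∑_{i∈I} ∑_{j∈J_i} z_{ij} u_{ij} ≤ B } is nonempty. Define the objective W(z) = ∏_{i∈I} ∏_{j∈J_i} P(d_j − a_i ≤ τ_i)^{z_{ij}}. Say patients i and k are of the same type if J_i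 = J_k, τ_i = τ_k, and u_{im} = u_{km} for all m ∈ J_i. Fix t ∈ ℝ and a bed j ∈ J such that d_j = t almost surely, and suppose d_h ≥ t almost surely for every h ∈ J. Then there exists a plan z* maximizing W over F(B) with the following property: if z*_{kj} = 1 for some patient k ∈ I, then a_k ≤ a_ℓ for every patient ℓ ∈ I of the same type as k. -/
open MeasureTheory ProbabilityTheory Finset

/-- An assignment plan `z` (with values in `{0,1}`, encoded as naturals `≤ 1`) is admissible if
patients can only be assigned beds in their allowable sets, every patient is assigned exactly one
bed, and every bed takes at most one patient. -/
def Admissible {I J : Type*} [Fintype I] (Ji : I → Finset J) (z : I → J → ℕ) : Prop :=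
  (∀ i j, z i j ≤ 1) ∧ (∀ i j, j ∉ Ji i → z i j = 0) ∧
    (∀ i, ∑ j ∈ Ji i, z i j = 1) ∧ (∀ j : J, ∑ i, z i j ≤ 1)

/-- Total overflow cost of a plan. -/
def overflowCost {I J : Type*} [Fintype I] (Ji : I → Finset J) (u : I → J → ℝ)
    (z : I → J → ℕ) : ℝ :=
  ∑ i, ∑ j ∈ Ji i, (z i j : ℝ) * u i j

/-- The `P` model objective: the product over assigned patient–bed pairs of the probabilities
that the boarding time `d j - a i` meets the delay target `τ i`. -/
noncomputable def objW {I J Ω : Type*} [Fintype I] [MeasurableSpace Ω] (Ji : I → Finset J)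
    (μ : Measure Ω) (d : J → Ω → ℝ) (a τ : I → ℝ) (z : I → J → ℕ) : ENNReal :=
  ∏ i, ∏ j ∈ Ji i, (μ {ω | d j ω - a i ≤ τ i}) ^ (z i j)

/-- Patients `i` and `k` are of the same type. -/
def SameType {I J : Type*} (Ji : I → Finset J) (τ : I → ℝ) (u : I → J → ℝ) (i k : I) : Prop :=
  Ji i = Ji k ∧ τ i = τ k ∧ ∀ m ∈ Ji i, u i m = u k m

/-! Take any maximizer `z` of `W` on the finite feasible set. If some patient `k` holds the free
bed `j`, let `l` be the earliest patient of `k`'s type and swap the rows of `k` and `l`. Since the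
two are of the same type, the swapped plan is admissible with the same cost, and only the factors
of `k` and `l` in `W` change. Bed `j` meets `l`'s target surely if `t - a l ≤ τ`, and then also
`k`'s; otherwise `l` misses the target on every bed since `d ≥ t`. Either way the swap does not
decrease `W`, so the swapped plan is still optimal and `l` holds bed `j`. -/

theorem Fintype.prod_le_prod_of_eq_off_pair {ι M : Type*} [Fintype ι] [DecidableEq ι]
    [CommMonoid M] [Preorder M] [MulRightMono M] {f g : ι → M} {k l : ι} (hkl : k ≠ l)
    (hfg : ∀ i, i ≠ k → i ≠ l → f i = g i) (h : f k * f l ≤ g k * g l) :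
    ∏ i, f i ≤ ∏ i, g i := by
  have hcompl : ∏ i ∈ {k, l}ᶜ, f i = ∏ i ∈ {k, l}ᶜ, g i :=
    Finset.prod_congr rfl fun i hi => by
      simp only [mem_compl, mem_insert, mem_singleton, not_or] at hi
      exact hfg i hi.1 hi.2
  rw [← prod_mul_prod_compl {k, l} f, ← prod_mul_prod_compl {k, l} g, prod_pair hkl,
    prod_pair hkl, hcompl]
  exact mul_le_mul_left h _

/-- The exchange inequality: handing the bed that is free now (`X = t`) to the patient who
asked earlier (`b ≤ c`) does not decrease the product of the two on-time probabilities. -/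
theorem measure_sub_le_mul_le_swap {Ω : Type*} [MeasurableSpace Ω] (μ : Measure Ω)
    {X Y : Ω → ℝ} {t b c τ : ℝ} (hX : ∀ᵐ ω ∂μ, X ω = t) (hY : ∀ᵐ ω ∂μ, t ≤ Y ω) (hbc : b ≤ c) :
    μ {ω | X ω - c ≤ τ} * μ {ω | Y ω - b ≤ τ} ≤ μ {ω | Y ω - c ≤ τ} * μ {ω | X ω - b ≤ τ} := by
  by_cases hb : t - b ≤ τ
  · have hfull : ∀ s, t - s ≤ τ → μ {ω | X ω - s ≤ τ} = μ Set.univ := fun s hs =>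
      measure_congr <| Filter.eventuallyEq_univ.2 <| hX.mono fun ω hω => by
        simpa [hω] using hs
    rw [hfull b hb, hfull c (by linarith), mul_comm]
    gcongr
  · have hnull : μ {ω | Y ω - b ≤ τ} = 0 :=
      measure_eq_zero_iff_ae_notMem.2 <| hY.mono fun ω hω (hle : Y ω - b ≤ τ) => hb (by linarith)
    rw [hnull, mul_zero]
    exact zero_le

namespace SameType

variable {I J : Type*} {Ji : I → Finset J} {τ : I → ℝ} {u : I → J → ℝ} {i k l : I}

theorem refl (i : I) : SameType Ji τ u i i := ⟨rfl, rfl, fun _ _ => rfl⟩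

theorem symm (h : SameType Ji τ u i k) : SameType Ji τ u k i :=
  ⟨h.1.symm, h.2.1.symm, fun m hm => (h.2.2 m (h.1 ▸ hm)).symm⟩

theorem trans (hik : SameType Ji τ u i k) (hkl : SameType Ji τ u k l) : SameType Ji τ u i l :=
  ⟨hik.1.trans hkl.1, hik.2.1.trans hkl.2.1,
    fun m hm => (hik.2.2 m hm).trans (hkl.2.2 m (hik.1 ▸ hm))⟩

theorem swap_apply [DecidableEq I] (h : SameType Ji τ u k l) (i : I) :
    SameType Ji τ u (Equiv.swap k l i) i := by
  rcases eq_or_ne i k with rfl | hik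
  · simpa using h.symm
  rcases eq_or_ne i l with rfl | hil
  · simpa using h
  · simpa [Equiv.swap_apply_of_ne_of_ne hik hil] using refl i

end SameType

namespace Admissible

variable {I J : Type*} [Fintype I] {Ji : I → Finset J} {z : I → J → ℕ} {i k : I} {m m' : J}

theorem mem_of_eq_one (hz : Admissible Ji z) (h : z i m = 1) : m ∈ Ji i := by
  by_contra hm
  simp [hz.2.1 i m hm] at h

theorem exists_eq_one (hz : Admissible Ji z) (i : I) : ∃ m, z i m = 1 := by
  obtain ⟨m, -, hm⟩ := exists_ne_zero_of_sum_ne_zero (hz.2.2.1 i ▸ one_ne_zero)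
  exact ⟨m, le_antisymm (hz.1 i m) (Nat.one_le_iff_ne_zero.2 hm)⟩

theorem eq_zero_of_ne (hz : Admissible Ji z) (h : z i m = 1) (hne : m' ≠ m) : z i m' = 0 := by
  classical
  by_cases hm' : m' ∈ Ji i
  · have hsum := hz.2.2.1 i
    rw [← add_sum_erase _ _ (hz.mem_of_eq_one h), h, add_eq_left, sum_eq_zero_iff] at hsum
    exact hsum m' (mem_erase.2 ⟨hne, hm'⟩)
  · exact hz.2.1 i m' hm'

theorem eq_of_eq_one (hz : Admissible Ji z) (hi : z i m = 1) (hk : z k m = 1) : i = k := by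
  classical
  by_contra hik
  have hpair : ∑ x ∈ {i, k}, z x m ≤ ∑ x, z x m := sum_le_sum_of_subset (subset_univ _)
  rw [sum_pair hik, hi, hk] at hpair
  have := hz.2.2.2 m
  omega

theorem prod_pow_eq {M : Type*} [CommMonoid M] (hz : Admissible Ji z) (h : z i m = 1)
    (f : J → M) : ∏ m' ∈ Ji i, f m' ^ z i m' = f m := by
  rw [prod_eq_single_of_mem m (hz.mem_of_eq_one h)
    fun m' _ hne => by rw [hz.eq_zero_of_ne h hne, pow_zero], h, pow_one]

theorem comp_perm (hz : Admissible Ji z) (σ : Equiv.Perm I) (hσ : ∀ i, Ji (σ i) = Ji i) :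
    Admissible Ji fun i => z (σ i) :=
  ⟨fun i => hz.1 (σ i), fun i m hm => hz.2.1 (σ i) m (hσ i ▸ hm),
    fun i => hσ i ▸ hz.2.2.1 (σ i), fun m => (Equiv.sum_comp σ (z · m)).symm ▸ hz.2.2.2 m⟩

theorem finite_setOf [Finite J] : {z : I → J → ℕ | Admissible Ji z}.Finite := by
  refine (Set.Finite.pi fun _ => Set.Finite.pi fun _ => Set.finite_Iic 1).subset ?_
  exact fun z hz i _ m _ => hz.1 i m

end Admissible

theorem overflowCost_comp_perm {I J : Type*} [Fintype I] {Ji : I → Finset J} {u : I → J → ℝ}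
    (z : I → J → ℕ) (σ : Equiv.Perm I) (hJ : ∀ i, Ji (σ i) = Ji i)
    (hu : ∀ i, ∀ m ∈ Ji i, u (σ i) m = u i m) :
    overflowCost Ji u (fun i => z (σ i)) = overflowCost Ji u z := by
  unfold overflowCost
  conv_rhs => rw [← Equiv.sum_comp σ]
  refine sum_congr rfl fun i _ => ?_
  rw [hJ i]
  exact sum_congr rfl fun m hm => by rw [hu i m hm]

theorem objW_le_objW_comp_swap {I J Ω : Type*} [Fintype I] [DecidableEq I] [MeasurableSpace Ω]
    {Ji : I → Finset J} {μ : Measure Ω} {d : J → Ω → ℝ} {a τ : I → ℝ} {z : I → J → ℕ}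
    {k l : I} {j m : J} {t : ℝ} (hz : Admissible Ji z) (hJ : Ji k = Ji l) (hτ : τ k = τ l)
    (hkj : z k j = 1) (hlm : z l m = 1) (hal : a l ≤ a k)
    (hj : ∀ᵐ ω ∂μ, d j ω = t) (hm : ∀ᵐ ω ∂μ, t ≤ d m ω) :
    objW Ji μ d a τ z ≤ objW Ji μ d a τ fun i => z (Equiv.swap k l i) := by
  rcases eq_or_ne k l with rfl | hkl
  · simp
  have hz' := hz.comp_perm (Equiv.swap k l) (Equiv.apply_swap_eq_self hJ)
  refine Fintype.prod_le_prod_of_eq_off_pair hkl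
    (fun i hik hil => by simp only [Equiv.swap_apply_of_ne_of_ne hik hil]) ?_
  rw [hz.prod_pow_eq hkj, hz.prod_pow_eq hlm, hz'.prod_pow_eq (i := k) (m := m) (by simpa),
    hz'.prod_pow_eq (i := l) (m := j) (by simpa), hτ]
  exact measure_sub_le_mul_le_swap μ hj hm hal

def FCFSAt {I J : Type*} (Ji : I → Finset J) (τ a : I → ℝ) (u : I → J → ℝ) (z : I → J → ℕ)
    (j : J) : Prop :=
  ∀ k, z k j = 1 → ∀ l, SameType Ji τ u k l → a k ≤ a l

theorem Admissible.exists_FCFSAt_objW_le {I J Ω : Type*} [Fintype I] [MeasurableSpace Ω]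
    {Ji : I → Finset J} {μ : Measure Ω} {d : J → Ω → ℝ} {a τ : I → ℝ} {u : I → J → ℝ}
    {z : I → J → ℕ} {k : I} {j : J} {t : ℝ} (hz : Admissible Ji z) (hkj : z k j = 1)
    (hj : ∀ᵐ ω ∂μ, d j ω = t) (hall : ∀ h : J, ∀ᵐ ω ∂μ, t ≤ d h ω) :
    ∃ z', Admissible Ji z' ∧ overflowCost Ji u z' = overflowCost Ji u z ∧
      objW Ji μ d a τ z ≤ objW Ji μ d a τ z' ∧ FCFSAt Ji τ a u z' j := by
  classical
  obtain ⟨l, hl, hmin⟩ :=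
    exists_min_image (univ.filter (SameType Ji τ u k)) a ⟨k, by simp [SameType.refl]⟩
  have hkl : SameType Ji τ u k l := (mem_filter.1 hl).2
  obtain ⟨m, hlm⟩ := hz.exists_eq_one l
  have hσ := hkl.swap_apply
  have hz' := hz.comp_perm (Equiv.swap k l) fun i => (hσ i).1
  refine ⟨_, hz', overflowCost_comp_perm z _ (fun i => (hσ i).1)
      (fun i m hm => (hσ i).2.2 m ((hσ i).1 ▸ hm)),
    objW_le_objW_comp_swap hz hkl.1 hkl.2.1 hkj hlm (hmin k (by simp [SameType.refl])) hj (hall m),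
    fun k' hk' l' hl' => ?_⟩
  obtain rfl : k' = l := hz'.eq_of_eq_one hk' (by simpa using hkj)
  exact hmin l' (by simpa using hkl.trans hl')

theorem exists_optimal_plan_FCFS_general
    {I J Ω : Type*} [Fintype I] [Fintype J]
    [MeasurableSpace Ω] {μ : Measure Ω}
    (Ji : I → Finset J)
    (d : J → Ω → ℝ)
    (a τ : I → ℝ)
    (u : I → J → ℝ)
    (Bstar B : ℝ)
    (hBstar : IsLeast {c : ℝ | ∃ z, Admissible Ji z ∧ overflowCost Ji u z = c} Bstar)
    (hB : Bstar ≤ B)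
    (t : ℝ) (j : J) (hj : ∀ᵐ ω ∂μ, d j ω = t)
    (hall : ∀ h : J, ∀ᵐ ω ∂μ, t ≤ d h ω) :
    ∃ zs : I → J → ℕ,
      (Admissible Ji zs ∧ overflowCost Ji u zs ≤ B) ∧
      (∀ z : I → J → ℕ, Admissible Ji z → overflowCost Ji u z ≤ B →
        objW Ji μ d a τ z ≤ objW Ji μ d a τ zs) ∧
      (∀ k : I, zs k j = 1 → ∀ l : I, SameType Ji τ u k l → a k ≤ a l) := by
  set S := {z | Admissible Ji z ∧ overflowCost Ji u z ≤ B}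
  have hS : S.Finite := Admissible.finite_setOf.subset fun _ hz => hz.1
  obtain ⟨z₀, hz₀, hc₀⟩ := hBstar.1
  obtain ⟨z, hzS, hzmax⟩ := Set.exists_max_image S (objW Ji μ d a τ) hS ⟨z₀, hz₀, hc₀ ▸ hB⟩
  by_cases hk : ∃ k, z k j = 1
  · obtain ⟨k, hkj⟩ := hk
    obtain ⟨z', hz', hcost, hW, hfcfs⟩ := hzS.1.exists_FCFSAt_objW_le (u := u) hkj hj hall
    exact ⟨z', ⟨hz', hcost ▸ hzS.2⟩, fun w hw hwB => (hzmax w ⟨hw, hwB⟩).trans hW, hfcfs⟩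
  · exact ⟨z, hzS, fun w hw hwB => hzmax w ⟨hw, hwB⟩, fun k hk' => (hk ⟨k, hk'⟩).elim⟩

/-- Proposition 1: there is an optimal plan under which the patient assigned to the currently
available bed `j` has the earliest bed request time in his type. -/
theorem exists_optimal_plan_FCFS
    {I J Ω : Type*} [Fintype I] [Nonempty I] [Fintype J]
    [MeasurableSpace Ω] {μ : Measure Ω} [IsProbabilityMeasure μ]
    (Ji : I → Finset J) (hJiNe : ∀ i, (Ji i).Nonempty)
    (hJcover : ∀ j : J, ∃ i, j ∈ Ji i)
    (d : J → Ω → ℝ) (hd : ∀ j, Measurable (d j))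
    (a τ : I → ℝ) (hτ : ∀ i, 0 < τ i)
    (u : I → J → ℝ) (hu : ∀ i j, 0 ≤ u i j)
    (Bstar B : ℝ)
    (hBstar : IsLeast {c : ℝ | ∃ z, Admissible Ji z ∧ overflowCost Ji u z = c} Bstar)
    (hB : Bstar ≤ B)
    (t : ℝ) (j : J) (hj : ∀ᵐ ω ∂μ, d j ω = t)
    (hall : ∀ h : J, ∀ᵐ ω ∂μ, t ≤ d h ω) :
    ∃ zs : I → J → ℕ,
      (Admissible Ji zs ∧ overflowCost Ji u zs ≤ B) ∧
      (∀ z : I → J → ℕ, Admissible Ji z → overflowCost Ji u z ≤ B →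
        objW Ji μ d a τ z ≤ objW Ji μ d a τ zs) ∧
      (∀ k : I, zs k j = 1 → ∀ l : I, SameType Ji τ u k l → a k ≤ a l) :=
  exists_optimal_plan_FCFS_general Ji d a τ u Bstar B hBstar hB t j hj hall
end

section
/- Let (Ω, F, P) be a probability space, let t ∈ ℝ, and let d_j, d_h : Ω → ℝ be random variables with d_j = t almost surely and d_h ≥ t almost surely. Let a_ℓ, a_k, τ ∈ ℝ with a_ℓ ≤ a_k. Then P(d_j − a_ℓ ≤ τ) · P(d_h − a_k ≤ τ) ≥ P(d_j − a_k ≤ τ) · P(d_h − a_ℓ ≤ τ). -/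
open MeasureTheory

/-!
If `t - aℓ ≤ τ`, the bed available now meets the target for both patients almost surely, so the
first factors on the two sides agree, and for the later bed the earlier request time can only lower
the probability. If `t - aℓ > τ`, the later bed misses the target for the earlier patient almost
surely, so the left-hand side vanishes.
-/

lemma setOf_sub_le_subset_of_le {Ω : Type*} (f : Ω → ℝ) (τ : ℝ) {a b : ℝ} (hab : a ≤ b) :
    {ω | f ω - a ≤ τ} ⊆ {ω | f ω - b ≤ τ} :=
  fun ω (hω : f ω - a ≤ τ) => show f ω - b ≤ τ by linarith

section

variable {Ω : Type*} [MeasurableSpace Ω] {μ : Measure Ω} {f : Ω → ℝ} {t a τ : ℝ}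

lemma measure_setOf_sub_le_eq_measure_univ (hf : ∀ᵐ ω ∂μ, f ω ≤ t) (h : t - a ≤ τ) :
    μ {ω | f ω - a ≤ τ} = μ Set.univ :=
  measure_congr <| Filter.eventuallyEq_univ.mpr <| hf.mono fun ω hω => show f ω - a ≤ τ by linarith

lemma measure_setOf_sub_le_eq_zero (hf : ∀ᵐ ω ∂μ, t ≤ f ω) (h : τ < t - a) :
    μ {ω | f ω - a ≤ τ} = 0 :=
  measure_eq_zero_iff_ae_notMem.mpr <| hf.mono fun ω hω (hω' : f ω - a ≤ τ) => by linarith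

end

theorem exchange_inequality_general
    {Ω : Type*} [MeasurableSpace Ω] {μ : Measure Ω}
    (t : ℝ) (dj dh : Ω → ℝ)
    (hj : ∀ᵐ ω ∂μ, dj ω = t) (hh : ∀ᵐ ω ∂μ, t ≤ dh ω)
    (aℓ ak τ : ℝ) (hle : aℓ ≤ ak) :
    μ {ω | dj ω - ak ≤ τ} * μ {ω | dh ω - aℓ ≤ τ} ≤
      μ {ω | dj ω - aℓ ≤ τ} * μ {ω | dh ω - ak ≤ τ} := by
  rcases le_or_gt (t - aℓ) τ with hℓ | hℓ
  · have hj_le : ∀ᵐ ω ∂μ, dj ω ≤ t := hj.mono fun ω hω => hω.le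
    rw [measure_setOf_sub_le_eq_measure_univ hj_le (by linarith : t - ak ≤ τ),
      measure_setOf_sub_le_eq_measure_univ hj_le hℓ]
    exact mul_le_mul_right (measure_mono (setOf_sub_le_subset_of_le dh τ hle)) _
  · rw [measure_setOf_sub_le_eq_zero hh hℓ, mul_zero]
    exact zero_le

/-- The key exchange inequality: if bed `j` is available now (at time `t`) and bed `h` becomes
available no earlier than `t`, then giving the currently available bed to the patient with the
earlier request time does not decrease the product of target-attainment probabilities. -/
theorem exchange_inequality
    {Ω : Type*} [MeasurableSpace Ω] {μ : Measure Ω} [IsProbabilityMeasure μ]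
    (t : ℝ) (dj dh : Ω → ℝ) (hdj : Measurable dj) (hdh : Measurable dh)
    (hj : ∀ᵐ ω ∂μ, dj ω = t) (hh : ∀ᵐ ω ∂μ, t ≤ dh ω)
    (aℓ ak τ : ℝ) (hle : aℓ ≤ ak) :
    μ {ω | dj ω - ak ≤ τ} * μ {ω | dh ω - aℓ ≤ τ} ≤
      μ {ω | dj ω - aℓ ≤ τ} * μ {ω | dh ω - ak ≤ τ} :=
  exchange_inequality_general t dj dh hj hh aℓ ak τ hle
end
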